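/- Let $x$ solve $x(t) = x_0 + \int_0^t g(s, x(s)) ds$ on $[0,T]$ with $\|g(s,\xi)\| \leq m(s) + L_s\|\xi\|$ where $m, L \geq 0$ are integrable and $L$ is bounded on $[0,t_j]$. Then $\int_0^{t_j} L_s \|x(s) - x(\tau^N(s))\|\, ds \leq \Delta t_N \left( \sup_{0 \leq s \leq t_j} L_s \right) \int_0^{t_j} \big( m(s) + L_s \|x(s)\| \big)\, ds$. -/
import Mathlib

open MeasureTheory

/-- The largest mesh point of the uniform mesh of `[0,T]` with `N` subintervals
not exceeding `s` (for `s ≥ 0`). -/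
noncomputable def meshTau (T : ℝ) (N : ℕ) (s : ℝ) : ℝ :=
  (Nat.floor (s * N / T) : ℝ) * (T / N)

theorem second_term_estimate (T : ℝ) (hT : 0 < T) (d N : ℕ) (hN : 1 ≤ N)
    (g : ℝ → EuclideanSpace ℝ (Fin d) → EuclideanSpace ℝ (Fin d))
    (m L : ℝ → ℝ) (hm : ∀ s, 0 ≤ m s) (hL : ∀ s, 0 ≤ L s)
    (hmint : IntervalIntegrable m volume 0 T)
    (hLint : IntervalIntegrable L volume 0 T)
    (hgrowth : ∀ s ∈ Set.Icc (0:ℝ) T, ∀ ξ : EuclideanSpace ℝ (Fin d),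
      ‖g s ξ‖ ≤ m s + L s * ‖ξ‖)
    (x₀ : EuclideanSpace ℝ (Fin d)) (x : ℝ → EuclideanSpace ℝ (Fin d))
    (hx : ∀ t ∈ Set.Icc (0:ℝ) T, x t = x₀ + ∫ s in (0:ℝ)..t, g s (x s))
    (hxint : IntervalIntegrable (fun s => g s (x s)) volume 0 T)
    (j : ℕ) (hj : j ≤ N)
    (hBdd : BddAbove (L '' Set.Icc (0:ℝ) ((j : ℝ) * (T/N))))
    (hi : IntervalIntegrable (fun s => L s * ‖x s - x (meshTau T N s)‖) volume 0
      ((j : ℝ) * (T/N)))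
    (hi2 : IntervalIntegrable (fun s => m s + L s * ‖x s‖) volume 0 ((j : ℝ) * (T/N))) :
    (∫ s in (0:ℝ)..((j : ℝ) * (T/N)), L s * ‖x s - x (meshTau T N s)‖)
      ≤ (T/N) * sSup (L '' Set.Icc (0:ℝ) ((j : ℝ) * (T/N)))
          * ∫ s in (0:ℝ)..((j : ℝ) * (T/N)), (m s + L s * ‖x s‖) := by
  have hNpos : (0:ℝ) < N := by exact_mod_cast Nat.lt_of_lt_of_le Nat.zero_lt_one hN
  set Δ : ℝ := T / N with hΔdef
  have hΔ : 0 < Δ := div_pos hT hNpos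
  set tj : ℝ := (j:ℝ) * Δ with htjdef
  have htj0 : 0 ≤ tj := mul_nonneg (Nat.cast_nonneg j) hΔ.le
  have htjT : tj ≤ T := by
    have : (j:ℝ) ≤ N := Nat.cast_le.2 hj
    calc tj ≤ (N:ℝ) * Δ := by nlinarith
    _ = T := by rw [hΔdef]; field_simp
  set S := sSup (L '' Set.Icc 0 tj) with hSdef
  have hS0 : 0 ≤ S := le_trans (hL 0) (le_csSup hBdd ⟨0, ⟨le_refl _, htj0⟩, rfl⟩)
  have hLS : ∀ s ∈ Set.Icc (0:ℝ) tj, L s ≤ S := fun s hs => le_csSup hBdd ⟨s, hs, rfl⟩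
  -- mesh identity
  have hΔN : Δ * N = T := by rw [hΔdef]; field_simp
  have hmesh : ∀ k : ℕ, ∀ s : ℝ, (k:ℝ)*Δ ≤ s → s < ((k:ℝ)+1)*Δ → meshTau T N s = (k:ℝ)*Δ := by
    intro k s h1 h2
    have hs0 : (0:ℝ) ≤ s := le_trans (by positivity) h1
    have hfl : Nat.floor (s * N / T) = k := by
      rw [Nat.floor_eq_iff (by positivity)]
      constructor
      · rw [le_div_iff₀ hT]; nlinarith
      · rw [div_lt_iff₀ hT]; push_cast; nlinarith
    unfold meshTau
    rw [hfl, ← hΔdef]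
  have hmesh_pt : ∀ k : ℕ, meshTau T N ((k:ℝ)*Δ) = (k:ℝ)*Δ := by
    intro k
    have h1 : (k:ℝ)*Δ * N / T = (k:ℕ) := by rw [hΔdef]; field_simp
    unfold meshTau
    rw [h1, Nat.floor_natCast, ← hΔdef]
  -- helper facts about subintervals
  have hsub : ∀ k : ℕ, k < j → Set.uIcc ((k:ℝ)*Δ) (((k:ℝ)+1)*Δ) ⊆ Set.uIcc (0:ℝ) tj := by
    intro k hk
    apply Set.uIcc_subset_uIcc
    · rw [Set.uIcc_of_le htj0]
      exact ⟨mul_nonneg (Nat.cast_nonneg k) hΔ.le,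
        by have : (k:ℝ) ≤ j := Nat.cast_le.2 hk.le; nlinarith⟩
    · rw [Set.uIcc_of_le htj0]
      constructor
      · positivity
      · have : (k:ℝ)+1 ≤ j := by exact_mod_cast hk
        nlinarith
  have hsubT : ∀ k : ℕ, k < j → Set.uIcc ((k:ℝ)*Δ) (((k:ℝ)+1)*Δ) ⊆ Set.uIcc (0:ℝ) T := by
    intro k hk
    refine (hsub k hk).trans (Set.uIcc_subset_uIcc ?_ ?_)
    · exact Set.left_mem_uIcc
    · rw [Set.uIcc_of_le hT.le]; exact ⟨htj0, htjT⟩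
  -- key per-interval estimate
  have key : ∀ k : ℕ, k < j →
      (∫ s in ((k:ℝ)*Δ)..(((k:ℝ)+1)*Δ), L s * ‖x s - x (meshTau T N s)‖)
        ≤ Δ * (S * ∫ s in ((k:ℝ)*Δ)..(((k:ℝ)+1)*Δ), (m s + L s * ‖x s‖)) := by
    intro k hk
    set a := (k:ℝ)*Δ with hadef
    set b := ((k:ℝ)+1)*Δ with hbdef
    have hab : a ≤ b := by nlinarith
    have ha0 : 0 ≤ a := by positivity
    have hbtj : b ≤ tj := by
      have : (k:ℝ)+1 ≤ j := by exact_mod_cast hk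
      nlinarith
    have hC0 : 0 ≤ ∫ s in a..b, (m s + L s * ‖x s‖) := by
      apply intervalIntegral.integral_nonneg hab
      intro u _; have := hm u; have := hL u; positivity
    set C := ∫ s in a..b, (m s + L s * ‖x s‖) with hCdef
    have hiab : IntervalIntegrable (fun s => L s * ‖x s - x (meshTau T N s)‖) volume a b :=
      hi.mono_set (hsub k hk)
    have hbound : ∀ s ∈ Set.Icc a b, L s * ‖x s - x (meshTau T N s)‖ ≤ S * C := by
      intro s hs
      rcases eq_or_lt_of_le hs.2 with h | h
      · -- s = b: meshTau s = s
        have : meshTau T N s = s := by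
          rw [h]
          have : b = ((k+1 : ℕ):ℝ)*Δ := by push_cast; ring
          rw [this, hmesh_pt (k+1)]
        rw [this]
        simp only [sub_self, norm_zero, mul_zero]
        positivity
      · have hms : meshTau T N s = a := hmesh k s hs.1 h
        rw [hms]
        have hs0T : s ∈ Set.Icc (0:ℝ) T := ⟨le_trans ha0 hs.1, le_trans hs.2 (hbtj.trans htjT)⟩
        have ha0T : a ∈ Set.Icc (0:ℝ) T := ⟨ha0, le_trans (hab.trans hbtj) htjT⟩
        have hint0 : ∀ t ∈ Set.Icc (0:ℝ) T, IntervalIntegrable (fun u => g u (x u)) volume 0 t :=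
          fun t ht => hxint.mono_set (Set.uIcc_subset_uIcc Set.left_mem_uIcc
            (by rw [Set.uIcc_of_le hT.le]; exact ht))
        have hdiff : x s - x a = ∫ u in a..s, g u (x u) := by
          rw [hx s hs0T, hx a ha0T]
          rw [add_sub_add_left_eq_sub]
          exact intervalIntegral.integral_interval_sub_left (hint0 s hs0T) (hint0 a ha0T)
        have hgint : IntervalIntegrable (fun u => g u (x u)) volume a s := by
          apply hxint.mono_set
          apply Set.uIcc_subset_uIcc <;> rw [Set.uIcc_of_le hT.le]
          exacts [ha0T, hs0T]
        have hhint : IntervalIntegrable (fun u => m u + L u * ‖x u‖) volume a b :=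
          hi2.mono_set (hsub k hk)
        have hnorm : ‖x s - x a‖ ≤ C := by
          rw [hdiff]
          calc ‖∫ u in a..s, g u (x u)‖ ≤ ∫ u in a..s, ‖g u (x u)‖ :=
                intervalIntegral.norm_integral_le_integral_norm hs.1
          _ ≤ ∫ u in a..s, (m u + L u * ‖x u‖) := by
                apply intervalIntegral.integral_mono_on hs.1
                · exact (hgint.norm)
                · exact hhint.mono_set (Set.uIcc_subset_uIcc_left
                    (by rw [Set.uIcc_of_le hab]; exact ⟨hs.1, hs.2⟩))
                · intro u hu
                  exact hgrowth u ⟨le_trans ha0 hu.1, le_trans hu.2 (le_trans hs.2 (hbtj.trans htjT))⟩ (x u)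
          _ ≤ C := by
                apply intervalIntegral.integral_mono_interval le_rfl hs.1 hs.2 _ hhint
                filter_upwards with u
                have := hm u; have := hL u; positivity
        have hLs : L s ≤ S := hLS s ⟨le_trans ha0 hs.1, le_trans hs.2 hbtj⟩
        exact mul_le_mul hLs hnorm (norm_nonneg _) hS0
    calc (∫ s in a..b, L s * ‖x s - x (meshTau T N s)‖) ≤ ∫ _s in a..b, S * C := by
          apply intervalIntegral.integral_mono_on hab hiab intervalIntegrable_const hbound
    _ = (b - a) * (S * C) := by rw [intervalIntegral.integral_const]; simp
    _ = Δ * (S * C) := by rw [hadef, hbdef]; ring_nf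
  -- sum up
  have acast : ∀ k : ℕ, ((k+1 : ℕ):ℝ)*Δ = ((k:ℝ)+1)*Δ := by intro k; push_cast; ring
  set a : ℕ → ℝ := fun k => (k:ℝ)*Δ with hadef
  have hint1 : ∀ k < j, IntervalIntegrable (fun s => L s * ‖x s - x (meshTau T N s)‖) volume (a k) (a (k+1)) := by
    intro k hk
    apply hi.mono_set
    rw [show a (k+1) = ((k:ℝ)+1)*Δ from acast k]
    exact hsub k hk
  have hint2 : ∀ k < j, IntervalIntegrable (fun s => m s + L s * ‖x s‖) volume (a k) (a (k+1)) := by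
    intro k hk
    apply hi2.mono_set
    rw [show a (k+1) = ((k:ℝ)+1)*Δ from acast k]
    exact hsub k hk
  have hsum1 := intervalIntegral.sum_integral_adjacent_intervals (μ := volume)
    (f := fun s => L s * ‖x s - x (meshTau T N s)‖) (a := a) (n := j) hint1
  have hsum2 := intervalIntegral.sum_integral_adjacent_intervals (μ := volume)
    (f := fun s => m s + L s * ‖x s‖) (a := a) (n := j) hint2
  have ha0 : a 0 = 0 := by simp [hadef]
  have haj : a j = tj := rfl
  rw [ha0, haj] at hsum1 hsum2
  calc (∫ s in (0:ℝ)..tj, L s * ‖x s - x (meshTau T N s)‖)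
      = ∑ k ∈ Finset.range j, ∫ s in a k..a (k+1), L s * ‖x s - x (meshTau T N s)‖ := hsum1.symm
    _ ≤ ∑ k ∈ Finset.range j, Δ * (S * ∫ s in a k..a (k+1), (m s + L s * ‖x s‖)) := by
        apply Finset.sum_le_sum
        intro k hk
        have := key k (Finset.mem_range.1 hk)
        rwa [show a (k+1) = ((k:ℝ)+1)*Δ from acast k]
    _ = Δ * S * ∑ k ∈ Finset.range j, ∫ s in a k..a (k+1), (m s + L s * ‖x s‖) := by
        rw [Finset.mul_sum]; congr 1; ext k; ring
    _ = Δ * S * ∫ s in (0:ℝ)..tj, (m s + L s * ‖x s‖) := by rw [hsum2]
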